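/- arXiv:2004.08971 — 4 statements merged into one kernel-verified Lean document; each statement's English description precedes it below -/
import Mathlib

section
/- Let γ : [0,1] → ℂ be a continuously differentiable path satisfying γ(1−t) = −conj(γ(t)) for all t ∈ [0,1]. Let f, ρ : ℂ → ℂ be continuous functions satisfying f(−conj(z)) = conj(f(z)) and ρ(−conj(z)) = conj(ρ(z)) for all z ∈ ℂ. Then the contour integral g = ∫_C f(α)·ρ(α) dα is a real number. -/
/-!
Reversing the parametrisation, `t ↦ 1 - t`, turns the integrand `F(γ t) γ'(t)` of the contour
integral into its complex conjugate, since the symmetry of `γ` gives `γ'(1 - t) = conj (γ' t)`.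
Hence the integral equals its own conjugate.
-/

/-- Contour integral of `f` along the path `γ : [0,1] → ℂ`:
`∫_C f(β) dβ := ∫₀¹ f(γ(t)) γ'(t) dt`. -/
noncomputable def cInt (γ : ℝ → ℂ) (f : ℂ → ℂ) : ℂ :=
  ∫ t in (0:ℝ)..1, f (γ t) * deriv γ t

open ComplexConjugate Set Filter Topology MeasureTheory

theorem deriv_one_sub_eq_conj_deriv {γ : ℝ → ℂ}
    (hsym : ∀ t ∈ Icc (0 : ℝ) 1, γ (1 - t) = -conj (γ t)) {t : ℝ} (ht : t ∈ Ioo (0 : ℝ) 1) :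
    deriv γ (1 - t) = conj (deriv γ t) := by
  have hloc : (fun s => γ (1 - s)) =ᶠ[𝓝 t] fun s => -conj (γ s) := by
    filter_upwards [Ioo_mem_nhds ht.1 ht.2] with s hs using hsym s (Ioo_subset_Icc_self hs)
  have hderiv := hloc.deriv_eq
  rw [deriv_comp_const_sub, deriv.fun_neg] at hderiv
  exact neg_injective (hderiv.trans (congrArg Neg.neg deriv.star))

theorem conj_cInt_eq_self {γ : ℝ → ℂ} {F : ℂ → ℂ}
    (hsym : ∀ t ∈ Icc (0 : ℝ) 1, γ (1 - t) = -conj (γ t))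
    (hF : ∀ z, F (-conj z) = conj (F z)) :
    conj (cInt γ F) = cInt γ F := by
  have hreflect : ∀ᵐ t, t ∈ uIoc (0 : ℝ) 1 →
      conj (F (γ t) * deriv γ t) = F (γ (1 - t)) * deriv γ (1 - t) := by
    filter_upwards [Measure.ae_ne volume (1 : ℝ)] with t hne ht
    rw [uIoc_of_le zero_le_one] at ht
    have ht' : t ∈ Ioo (0 : ℝ) 1 := ⟨ht.1, ht.2.lt_of_ne hne⟩
    rw [map_mul, ← hF, ← hsym t (Ioo_subset_Icc_self ht'), deriv_one_sub_eq_conj_deriv hsym ht']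
  calc conj (cInt γ F) = ∫ t in (0 : ℝ)..1, conj (F (γ t) * deriv γ t) :=
        intervalIntegral.intervalIntegral_conj.symm
    _ = ∫ t in (0 : ℝ)..1, F (γ (1 - t)) * deriv γ (1 - t) :=
        intervalIntegral.integral_congr_ae hreflect
    _ = cInt γ F := by
        simpa [cInt] using
          intervalIntegral.integral_comp_sub_left (a := 0) (b := 1) (fun u => F (γ u) * deriv γ u) 1

theorem stmt_2_general (γ : ℝ → ℂ)
    (hsym : ∀ t ∈ Set.Icc (0:ℝ) 1, γ (1 - t) = -(starRingEnd ℂ) (γ t))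
    (f ρ : ℂ → ℂ)
    (hfs : ∀ z : ℂ, f (-(starRingEnd ℂ) z) = (starRingEnd ℂ) (f z))
    (hρs : ∀ z : ℂ, ρ (-(starRingEnd ℂ) z) = (starRingEnd ℂ) (ρ z)) :
    (cInt γ (fun α => f α * ρ α)).im = 0 :=
  Complex.conj_eq_iff_im.mp <| conj_cInt_eq_self hsym fun z => by rw [hfs, hρs, map_mul]

/-- if the contour satisfies `γ(1−t) = −conj(γ(t))` on `[0,1]` and
`f`, `ρ` are continuous, satisfying `f(−z*) = f(z)*` and `ρ(−z*) = ρ(z)*`, then the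
contour integral `g = ∫_C f(α)·ρ(α) dα` is real. -/
theorem stmt_2 (γ : ℝ → ℂ) (hγ : ContDiff ℝ 1 γ)
    (hsym : ∀ t ∈ Set.Icc (0:ℝ) 1, γ (1 - t) = -(starRingEnd ℂ) (γ t))
    (f ρ : ℂ → ℂ) (hf : Continuous f) (hρ : Continuous ρ)
    (hfs : ∀ z : ℂ, f (-(starRingEnd ℂ) z) = (starRingEnd ℂ) (f z))
    (hρs : ∀ z : ℂ, ρ (-(starRingEnd ℂ) z) = (starRingEnd ℂ) (ρ z)) :
    (cInt γ (fun α => f α * ρ α)).im = 0 :=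
  stmt_2_general γ hsym f ρ hfs hρs
end

section
/- Let γ : [0,1] → ℂ be a continuously differentiable path (the contour C) with endpoints A = γ(0), B = γ(1). Let Θ : ℂ → ℂ be holomorphic with derivative K = Θ'. Let F : ℂ × ℂ → ℂ be holomorphic in each variable with continuous derivatives, satisfying F(α,γ) + (1/(2π))·∫_C K(α−β)·F(β,γ) dβ = (1/(2π))·Θ(α−γ) for all α, γ ∈ ℂ, and let R(α,γ) := ∂F/∂γ(α,γ). Assume R satisfies the dual resolvent identity R(α,γ) + (1/(2π))·∫_C R(α,β)·K(β−γ) dβ = −(1/(2π))·K(α−γ) for all α, γ ∈ ℂ. Then for all α, γ ∈ ℂ: ∂F/∂α(α,γ) = −R(α,γ) − R(α,B)·F(B,γ) + R(α,A)·F(A,γ). -/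
open MeasureTheory Set Metric

section ContourIntegral

variable {γ : ℝ → ℂ}

theorem cInt_const_mul (c : ℂ) (f : ℂ → ℂ) :
    cInt γ (fun β => c * f β) = c * cInt γ f := by
  simp only [cInt, mul_assoc, intervalIntegral.integral_const_mul]

theorem cInt_mul_const (f : ℂ → ℂ) (c : ℂ) :
    cInt γ (fun β => f β * c) = cInt γ f * c := by
  simp only [cInt, mul_right_comm _ c, intervalIntegral.integral_mul_const]

theorem continuous_cInt_integrand (hγ : ContDiff ℝ 1 γ) {f : ℂ → ℂ} (hf : Continuous f) :
    Continuous fun t => f (γ t) * deriv γ t :=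
  (hf.comp hγ.continuous).mul (hγ.continuous_deriv le_rfl)

theorem cInt_add (hγ : ContDiff ℝ 1 γ) {f g : ℂ → ℂ} (hf : Continuous f) (hg : Continuous g) :
    cInt γ (fun β => f β + g β) = cInt γ f + cInt γ g := by
  simp only [cInt, add_mul]
  exact intervalIntegral.integral_add ((continuous_cInt_integrand hγ hf).intervalIntegrable 0 1)
    ((continuous_cInt_integrand hγ hg).intervalIntegrable 0 1)

theorem cInt_sub (hγ : ContDiff ℝ 1 γ) {f g : ℂ → ℂ} (hf : Continuous f) (hg : Continuous g) :
    cInt γ (fun β => f β - g β) = cInt γ f - cInt γ g := by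
  simp only [cInt, sub_mul]
  exact intervalIntegral.integral_sub ((continuous_cInt_integrand hγ hf).intervalIntegrable 0 1)
    ((continuous_cInt_integrand hγ hg).intervalIntegrable 0 1)

theorem cInt_finsetSum (hγ : ContDiff ℝ 1 γ) {ι : Type*} (s : Finset ι) {f : ι → ℂ → ℂ}
    (hf : ∀ i ∈ s, Continuous (f i)) :
    cInt γ (fun β => ∑ i ∈ s, f i β) = ∑ i ∈ s, cInt γ (f i) := by
  simp only [cInt, Finset.sum_mul]
  exact intervalIntegral.integral_finsetSum fun i hi =>
    (continuous_cInt_integrand hγ (hf i hi)).intervalIntegrable 0 1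

theorem cInt_eq_sub_of_hasDerivAt (hγ : ContDiff ℝ 1 γ) {Φ φ : ℂ → ℂ}
    (hΦ : ∀ z, HasDerivAt Φ (φ z) z) (hφ : Continuous φ) :
    cInt γ φ = Φ (γ 1) - Φ (γ 0) := by
  refine intervalIntegral.integral_eq_sub_of_hasDerivAt (f := Φ ∘ γ) (fun t _ => ?_)
    ((continuous_cInt_integrand hγ hφ).intervalIntegrable 0 1)
  exact (hΦ (γ t)).comp t ((hγ.differentiable one_ne_zero t).hasDerivAt)

theorem continuous_cInt (hγ : ContDiff ℝ 1 γ) {G : ℂ → ℂ → ℂ}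
    (hG : Continuous fun q : ℂ × ℂ => G q.1 q.2) :
    Continuous fun z => cInt γ (G z) :=
  intervalIntegral.continuous_parametric_intervalIntegral_of_continuous' (f := fun z t =>
    G z (γ t) * deriv γ t)
    ((hG.comp (continuous_fst.prodMk (hγ.continuous.comp continuous_snd))).mul
      ((hγ.continuous_deriv le_rfl).comp continuous_snd)) 0 1

theorem cInt_comm (hγ : ContDiff ℝ 1 γ) {G : ℂ → ℂ → ℂ}
    (hG : Continuous fun q : ℂ × ℂ => G q.1 q.2) :
    cInt γ (fun s => cInt γ (fun t => G s t)) = cInt γ (fun t => cInt γ (fun s => G s t)) := by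
  have hγc := hγ.continuous
  have hγ'c := hγ.continuous_deriv le_rfl
  have hint : Continuous fun p : ℝ × ℝ => G (γ p.1) (γ p.2) * deriv γ p.2 * deriv γ p.1 :=
    ((hG.comp ((hγc.comp continuous_fst).prodMk (hγc.comp continuous_snd))).mul
      (hγ'c.comp continuous_snd)).mul (hγ'c.comp continuous_fst)
  simp only [cInt, ← intervalIntegral.integral_mul_const]
  rw [intervalIntegral_intervalIntegral_swap]
  · refine intervalIntegral.integral_congr fun t _ => ?_
    exact intervalIntegral.integral_congr fun s _ => mul_right_comm _ _ _
  · rw [uIoc_of_le zero_le_one]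
    exact (hint.continuousOn.integrableOn_compact (isCompact_Icc.prod isCompact_Icc)).mono_set
      (prod_mono Ioc_subset_Icc_self Ioc_subset_Icc_self)

theorem hasDerivAt_cInt (hγ : ContDiff ℝ 1 γ) {Φ Φ' : ℂ → ℂ → ℂ}
    (hΦ : ∀ β x, HasDerivAt (fun a => Φ a β) (Φ' x β) x) (hΦc : ∀ a, Continuous (Φ a))
    (hΦ'c : Continuous fun q : ℂ × ℂ => Φ' q.1 q.2) (a₀ : ℂ) :
    HasDerivAt (fun a => cInt γ (Φ a)) (cInt γ (Φ' a₀)) a₀ := by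
  have hγc := hγ.continuous
  have hγ'c := hγ.continuous_deriv le_rfl
  obtain ⟨M, hM⟩ : ∃ M, ∀ q ∈ closedBall a₀ 1 ×ˢ (γ '' Icc 0 1), ‖Φ' q.1 q.2‖ ≤ M :=
    ((isCompact_closedBall a₀ 1).prod (isCompact_Icc.image hγc)).exists_bound_of_continuousOn
      hΦ'c.continuousOn
  refine (intervalIntegral.hasDerivAt_integral_of_dominated_loc_of_deriv_le
    (F' := fun x t => Φ' x (γ t) * deriv γ t) (bound := fun t => M * ‖deriv γ t‖)
    (ball_mem_nhds a₀ one_pos) ?_ ?_ ?_ ?_ ?_ ?_).2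
  · exact .of_forall fun x => (continuous_cInt_integrand hγ (hΦc x)).aestronglyMeasurable
  · exact (continuous_cInt_integrand hγ (hΦc a₀)).intervalIntegrable 0 1
  · exact ((hΦ'c.comp (continuous_const.prodMk hγc)).mul hγ'c).aestronglyMeasurable
  · refine .of_forall fun t ht x hx => ?_
    rw [uIoc_of_le zero_le_one] at ht
    rw [norm_mul]
    exact mul_le_mul_of_nonneg_right
      (hM (x, γ t) ⟨ball_subset_closedBall hx, mem_image_of_mem γ (Ioc_subset_Icc_self ht)⟩)
      (norm_nonneg _)
  · exact (continuous_const.mul hγ'c.norm).intervalIntegrable 0 1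
  · exact .of_forall fun t _ x _ => (hΦ (γ t) x).mul_const _

end ContourIntegral

section Resolvent

variable {γ : ℝ → ℂ} {k : ℂ → ℂ → ℂ} {c : ℂ} {u r : ℂ → ℂ}

theorem eq_add_cInt_mul_of_resolvent (hγ : ContDiff ℝ 1 γ)
    (hk : Continuous fun q : ℂ × ℂ => k q.1 q.2) (hu_cont : Continuous u) (hr_cont : Continuous r)
    {h : ℂ → ℂ} (hsol : ∀ x, u x + c * cInt γ (fun β => k x β * u β) = h x) (a : ℂ)
    (hres : ∀ x, r x + c * cInt γ (fun β => r β * k β x) = -c * k a x) :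
    u a = h a + cInt γ (fun β => r β * h β) := by
  have hku : Continuous fun q : ℂ × ℂ => k q.1 q.2 * u q.2 := hk.mul (hu_cont.comp continuous_snd)
  have hTc : Continuous fun s => cInt γ (fun t => k s t * u t) := continuous_cInt hγ hku
  have hpair : cInt γ (fun β => r β * h β) = cInt γ (fun β => r β * u β)
      + c * cInt γ (fun s => cInt γ (fun t => r s * (k s t * u t))) := by
    simp only [cInt_const_mul, ← hsol, mul_add]
    rw [cInt_add hγ (f := fun β => r β * u β) (by fun_prop) (by fun_prop), ← cInt_const_mul]
    simp only [mul_left_comm]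
  have hswap : c * cInt γ (fun s => cInt γ (fun t => r s * (k s t * u t)))
      = -(c * cInt γ (fun t => k a t * u t)) - cInt γ (fun t => r t * u t) := by
    rw [cInt_comm hγ ((hr_cont.comp continuous_fst).mul hku)]
    calc c * cInt γ (fun t => cInt γ (fun s => r s * (k s t * u t)))
        = cInt γ (fun t => c * cInt γ (fun s => r s * k s t) * u t) := by
          simp only [← cInt_const_mul, ← cInt_mul_const, mul_assoc]
      _ = cInt γ (fun t => -c * (k a t * u t) - r t * u t) := by
          congr 1; funext t; linear_combination u t * hres t
      _ = -(c * cInt γ (fun t => k a t * u t)) - cInt γ (fun t => r t * u t) := by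
          rw [cInt_sub hγ (f := fun t => -c * (k a t * u t)) (by fun_prop) (by fun_prop),
            cInt_const_mul, neg_mul]
  linear_combination hsol a - hpair - hswap

theorem eq_neg_sum_of_resolvent (hγ : ContDiff ℝ 1 γ)
    (hk : Continuous fun q : ℂ × ℂ => k q.1 q.2) (hu_cont : Continuous u) (hr_cont : Continuous r)
    {ι : Type*} (s : Finset ι) (w p : ι → ℂ)
    (hsol : ∀ x, u x + c * cInt γ (fun β => k x β * u β) = c * ∑ i ∈ s, w i * k x (p i)) (a : ℂ)
    (hres : ∀ x, r x + c * cInt γ (fun β => r β * k β x) = -c * k a x) :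
    u a = -∑ i ∈ s, w i * r (p i) := by
  have hexpand : cInt γ (fun β => r β * (c * ∑ i ∈ s, w i * k β (p i)))
      = ∑ i ∈ s, w i * (c * cInt γ (fun β => r β * k β (p i))) := by
    simp only [← cInt_const_mul]
    rw [← cInt_finsetSum hγ s (f := fun i β => w i * (c * (r β * k β (p i))))
      fun i _ => by fun_prop]
    congr 1; funext β; rw [Finset.mul_sum, Finset.mul_sum]; congr 1; funext i; ring
  rw [eq_add_cInt_mul_of_resolvent hγ hk hu_cont hr_cont hsol a hres, hexpand, Finset.mul_sum,
    ← Finset.sum_add_distrib, ← Finset.sum_neg_distrib]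
  congr 1; funext i; linear_combination w i * hres (p i)

end Resolvent

theorem deriv_add_cInt_deriv_eq {γ : ℝ → ℂ} (hγ : ContDiff ℝ 1 γ) {Θ K f : ℂ → ℂ}
    (hΘ : ∀ z, HasDerivAt Θ (K z) z) (hK : Differentiable ℂ K) (hK' : Continuous (deriv K))
    (hf : Differentiable ℂ f) (hf' : Continuous (deriv f)) {c g : ℂ}
    (hfeq : ∀ x, f x + c * cInt γ (fun β => K (x - β) * f β) = c * Θ (x - g)) (x : ℂ) :
    deriv f x + c * cInt γ (fun β => K (x - β) * deriv f β)
      = c * (K (x - g) + K (x - γ 1) * f (γ 1) - K (x - γ 0) * f (γ 0)) := by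
  have hKc : Continuous K := hK.continuous
  have hfc : Continuous f := hf.continuous
  have hdiff : deriv f x + c * cInt γ (fun β => deriv K (x - β) * f β) = c * K (x - g) := by
    have hL : HasDerivAt (fun y => f y + c * cInt γ (fun β => K (y - β) * f β))
        (deriv f x + c * cInt γ (fun β => deriv K (x - β) * f β)) x := by
      refine (hf x).hasDerivAt.add (HasDerivAt.const_mul c (hasDerivAt_cInt hγ
        (Φ := fun y β => K (y - β) * f β) (Φ' := fun y β => deriv K (y - β) * f β)
        (fun β y => ?_) (fun y => by fun_prop) (by fun_prop) x))
      simpa using ((hK (y - β)).hasDerivAt.comp y ((hasDerivAt_id y).sub_const β)).mul_const (f β)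
    have hR : HasDerivAt (fun y => c * Θ (y - g)) (c * K (x - g)) x := by
      simpa using ((hΘ (x - g)).comp x ((hasDerivAt_id x).sub_const g)).const_mul c
    rw [funext hfeq] at hL
    exact hL.unique hR
  have hparts : cInt γ (fun β => K (x - β) * deriv f β - deriv K (x - β) * f β)
      = K (x - γ 1) * f (γ 1) - K (x - γ 0) * f (γ 0) := by
    refine cInt_eq_sub_of_hasDerivAt hγ (Φ := fun β => K (x - β) * f β) (fun β => ?_) (by fun_prop)
    refine (((hK (x - β)).hasDerivAt.comp β ((hasDerivAt_id β).const_sub x)).mul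
      (hf β).hasDerivAt).congr_deriv ?_
    simp only [Function.comp_apply]
    ring
  rw [cInt_sub hγ (by fun_prop) (by fun_prop)] at hparts
  linear_combination hdiff + c * hparts

theorem stmt_4_general (γ : ℝ → ℂ) (hγ : ContDiff ℝ 1 γ)
    (A B : ℂ) (hA : A = γ 0) (hB : B = γ 1)
    (Θ : ℂ → ℂ) (hΘ : Differentiable ℂ Θ)
    (K : ℂ → ℂ) (hK : K = deriv Θ)
    (F : ℂ → ℂ → ℂ)
    (hF1 : ∀ g : ℂ, Differentiable ℂ (fun a => F a g))
    (hFc1 : Continuous fun p : ℂ × ℂ => deriv (fun a => F a p.2) p.1)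
    (hFc2 : Continuous fun p : ℂ × ℂ => deriv (fun g => F p.1 g) p.2)
    (R : ℂ → ℂ → ℂ) (hRdef : ∀ a g : ℂ, R a g = deriv (fun g' => F a g') g)
    (hFeq : ∀ a g : ℂ,
      F a g + (1 / (2 * (Real.pi : ℂ))) * cInt γ (fun β => K (a - β) * F β g)
        = (1 / (2 * (Real.pi : ℂ))) * Θ (a - g))
    (hres : ∀ a g : ℂ,
      R a g + (1 / (2 * (Real.pi : ℂ))) * cInt γ (fun β => R a β * K (β - g))
        = -(1 / (2 * (Real.pi : ℂ))) * K (a - g)) :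
    ∀ a g : ℂ, deriv (fun a' => F a' g) a
      = -R a g - R a B * F B g + R a A * F A g := by
  intro a g
  subst hK hA hB
  have hKd : Differentiable ℂ (deriv Θ) := hΘ.deriv
  have hKc : Continuous (deriv Θ) := hKd.continuous
  have hu_cont : Continuous (deriv fun a' => F a' g) :=
    hFc1.comp (continuous_id.prodMk continuous_const)
  have hR_cont : Continuous (R a) := by
    rw [funext (hRdef a)]
    exact hFc2.comp (continuous_const.prodMk continuous_id)
  have hu := deriv_add_cInt_deriv_eq hγ (fun z => (hΘ z).hasDerivAt) hKd hKd.deriv.continuous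
    (hF1 g) hu_cont (hFeq · g)
  rw [eq_neg_sum_of_resolvent hγ (k := fun x β => deriv Θ (x - β)) (by fun_prop) hu_cont hR_cont
    Finset.univ ![1, F (γ 1) g, -F (γ 0) g] ![g, γ 1, γ 0]
    (fun x => by simp only [hu x, Fin.sum_univ_three, Matrix.cons_val]; ring) a (hres a)]
  simp only [Fin.sum_univ_three, Matrix.cons_val]
  ring

/-- for the solution `F` of `(I + (1/2π)K)∗F = (1/2π)Θ` (with `K = Θ'`) and
`R = ∂F/∂γ` satisfying the dual resolvent identity, one has
`∂F/∂α(α,γ) = −R(α,γ) − R(α,B)F(B,γ) + R(α,A)F(A,γ)`. -/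
theorem stmt_4 (γ : ℝ → ℂ) (hγ : ContDiff ℝ 1 γ)
    (A B : ℂ) (hA : A = γ 0) (hB : B = γ 1)
    (Θ : ℂ → ℂ) (hΘ : Differentiable ℂ Θ)
    (K : ℂ → ℂ) (hK : K = deriv Θ)
    (F : ℂ → ℂ → ℂ)
    (hF1 : ∀ g : ℂ, Differentiable ℂ (fun a => F a g))
    (hF2 : ∀ a : ℂ, Differentiable ℂ (fun g => F a g))
    (hFc1 : Continuous fun p : ℂ × ℂ => deriv (fun a => F a p.2) p.1)
    (hFc2 : Continuous fun p : ℂ × ℂ => deriv (fun g => F p.1 g) p.2)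
    (R : ℂ → ℂ → ℂ) (hRdef : ∀ a g : ℂ, R a g = deriv (fun g' => F a g') g)
    (hFeq : ∀ a g : ℂ,
      F a g + (1 / (2 * (Real.pi : ℂ))) * cInt γ (fun β => K (a - β) * F β g)
        = (1 / (2 * (Real.pi : ℂ))) * Θ (a - g))
    (hres : ∀ a g : ℂ,
      R a g + (1 / (2 * (Real.pi : ℂ))) * cInt γ (fun β => R a β * K (β - g))
        = -(1 / (2 * (Real.pi : ℂ))) * K (a - g)) :
    ∀ a g : ℂ, deriv (fun a' => F a' g) a
      = -R a g - R a B * F B g + R a A * F A g :=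
  stmt_4_general γ hγ A B hA hB Θ hΘ K hK F hF1 hFc1 hFc2 R hRdef hFeq hres
end

section
/- Let U ⊆ ℝ² be open with coordinates (q,H), and let G_H, G_q, A, B : U → ℂ be differentiable and D₋ᴮ, D₋ᴬ, D₊ᴮ, D₊ᴬ, ρᴮ, ρᴬ, ξ, ξ̃ : U → ℂ be functions with ρᴮ and ρᴬ nowhere zero. Assume that at every point of U: ∂G_H/∂x = −(1/π)·D₋ᴮ·ξ·∂B/∂x + (1/π)·D₋ᴬ·ξ̃·∂A/∂x and ∂G_q/∂x = −(i/(4π))·(1 + D₊ᴮ)·ξ·∂B/∂x − (i/(4π))·(1 − D₊ᴬ)·ξ̃·∂A/∂x for x ∈ {q, H}, and that ∂B/∂H = −2i·D₋ᴮ/ρᴮ, ∂B/∂q = (1 + D₊ᴮ)/(2ρᴮ), ∂A/∂H = −2i·D₋ᴬ/ρᴬ, ∂A/∂q = −(1 − D₊ᴬ)/(2ρᴬ). Then at every point of U: ∂G_H/∂H = (2i/π)·( (D₋ᴮ)²·ξ/ρᴮ − (D₋ᴬ)²·ξ̃/ρᴬ ); ∂G_H/∂q = ∂G_q/∂H = −(1/(2π))·(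 (1 + D₊ᴮ)·D₋ᴮ·ξ/ρᴮ + (1 − D₊ᴬ)·D₋ᴬ·ξ̃/ρᴬ ); and ∂G_q/∂q = −(i/(8π))·( (1 + D₊ᴮ)²·ξ/ρᴮ − (1 − D₊ᴬ)²·ξ̃/ρᴬ ). -/
/-- Partial derivative with respect to the first coordinate `q` of `(q,H) ∈ ℝ²`. -/
noncomputable def pdq (f : ℝ × ℝ → ℂ) (p : ℝ × ℝ) : ℂ :=
  deriv (fun x => f (x, p.2)) p.1

/-- Partial derivative with respect to the second coordinate `H` of `(q,H) ∈ ℝ²`. -/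
noncomputable def pdH (f : ℝ × ℝ → ℂ) (p : ℝ × ℝ) : ℂ :=
  deriv (fun y => f (p.1, y)) p.2

/-- the second derivatives of the density integral `g(q,H)`. Given the
first-order variational formulas for `G_H = ∂g/∂H`, `G_q = ∂g/∂q` and for the endpoints
`A`, `B`, the stated explicit formulas for `∂²g/∂H²`, `∂²g/∂q∂H = ∂²g/∂H∂q`, and
`∂²g/∂q²` hold on `U`. -/
theorem stmt_16 (U : Set (ℝ × ℝ)) (hU : IsOpen U)
    (GH Gq A B : ℝ × ℝ → ℂ)
    (hGH : DifferentiableOn ℝ GH U) (hGq : DifferentiableOn ℝ Gq U)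
    (hA : DifferentiableOn ℝ A U) (hB : DifferentiableOn ℝ B U)
    (Dmb Dma Dpb Dpa ρb ρa ξ ξt : ℝ × ℝ → ℂ)
    (hρb : ∀ p ∈ U, ρb p ≠ 0) (hρa : ∀ p ∈ U, ρa p ≠ 0)
    (hGHq : ∀ p ∈ U, pdq GH p
      = -(1 / (Real.pi : ℂ)) * Dmb p * ξ p * pdq B p
        + (1 / (Real.pi : ℂ)) * Dma p * ξt p * pdq A p)
    (hGHH : ∀ p ∈ U, pdH GH p
      = -(1 / (Real.pi : ℂ)) * Dmb p * ξ p * pdH B p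
        + (1 / (Real.pi : ℂ)) * Dma p * ξt p * pdH A p)
    (hGqq : ∀ p ∈ U, pdq Gq p
      = -(Complex.I / (4 * (Real.pi : ℂ))) * (1 + Dpb p) * ξ p * pdq B p
        - (Complex.I / (4 * (Real.pi : ℂ))) * (1 - Dpa p) * ξt p * pdq A p)
    (hGqH : ∀ p ∈ U, pdH Gq p
      = -(Complex.I / (4 * (Real.pi : ℂ))) * (1 + Dpb p) * ξ p * pdH B p
        - (Complex.I / (4 * (Real.pi : ℂ))) * (1 - Dpa p) * ξt p * pdH A p)
    (hBH : ∀ p ∈ U, pdH B p = -2 * Complex.I * Dmb p / ρb p)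
    (hBq : ∀ p ∈ U, pdq B p = (1 + Dpb p) / (2 * ρb p))
    (hAH : ∀ p ∈ U, pdH A p = -2 * Complex.I * Dma p / ρa p)
    (hAq : ∀ p ∈ U, pdq A p = -(1 - Dpa p) / (2 * ρa p)) :
    (∀ p ∈ U, pdH GH p
      = (2 * Complex.I / (Real.pi : ℂ)) *
          ((Dmb p) ^ 2 * ξ p / ρb p - (Dma p) ^ 2 * ξt p / ρa p)) ∧
    (∀ p ∈ U, pdq GH p
      = -(1 / (2 * (Real.pi : ℂ))) *
          ((1 + Dpb p) * Dmb p * ξ p / ρb p + (1 - Dpa p) * Dma p * ξt p / ρa p)) ∧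
    (∀ p ∈ U, pdH Gq p
      = -(1 / (2 * (Real.pi : ℂ))) *
          ((1 + Dpb p) * Dmb p * ξ p / ρb p + (1 - Dpa p) * Dma p * ξt p / ρa p)) ∧
    (∀ p ∈ U, pdq Gq p
      = -(Complex.I / (8 * (Real.pi : ℂ))) *
          ((1 + Dpb p) ^ 2 * ξ p / ρb p - (1 - Dpa p) ^ 2 * ξt p / ρa p)) := by
  have hπ : (Real.pi : ℂ) ≠ 0 := Complex.ofReal_ne_zero.mpr Real.pi_ne_zero
  refine ⟨fun p hp => ?_, fun p hp => ?_, fun p hp => ?_, fun p hp => ?_⟩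
  · rw [hGHH p hp, hBH p hp, hAH p hp]
    have hb := hρb p hp; have ha := hρa p hp
    field_simp
    ring_nf
    try { simp only [Complex.I_sq]; ring_nf }
  · rw [hGHq p hp, hBq p hp, hAq p hp]
    have hb := hρb p hp; have ha := hρa p hp
    field_simp
    ring_nf
    try { simp only [Complex.I_sq]; ring_nf }
  · rw [hGqH p hp, hBH p hp, hAH p hp]
    have hb := hρb p hp; have ha := hρa p hp
    field_simp
    ring_nf
    try { simp only [Complex.I_sq]; ring_nf }
  · rw [hGqq p hp, hBq p hp, hAq p hp]
    have hb := hρb p hp; have ha := hρa p hp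
    field_simp
    ring_nf
    try { simp only [Complex.I_sq]; ring_nf }
end

section
/- Let Θ : ℂ → ℂ be holomorphic with Θ(−z) = −Θ(z) and Θ(conj(z)) = conj(Θ(z)) for all z ∈ ℂ, and let K := Θ'. Let γ : [0,1] → ℂ be a continuously differentiable path satisfying γ(1−t) = −conj(γ(t)) for all t ∈ [0,1] (the contour C). Suppose F : ℂ × ℂ → ℂ is continuous and satisfies F(α,β) + (1/(2π))·∫_C K(α−β')·F(β',β) dβ' = (1/(2π))·Θ(α−β) for all α, β ∈ ℂ. Then the function G(α,β) := −conj( F(−conj(α), −conj(β)) ) satisfies the same integral equation: G(α,β) + (1/(2π))·∫_C K(α−β')·G(β',β) dβ' = (1/(2π))·Θ(α−β) for all α, β ∈ ℂ. -/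
/-!
Reparametrising the contour by `t ↦ 1 - t` and using `γ(1 - t) = -γ(t)*`, `γ'(1 - t) = γ'(t)*`
turns `∫_C f` into `-(∫_C f♯)*` with `f♯(w) = -f(-w*)*`. The kernel satisfies
`K(-z*) = K(z)*`, because `Θ'` inherits evenness from the oddness of `Θ` and commutes with
conjugation as `Θ` does; so `♯` applied to `β' ↦ K(α - β') G(β', β)` gives
`β' ↦ K(-α* - β') F(β', -β*)`, and conjugating the equation for `F` at `(-α*, -β*)` yields the
equation for `G`.
-/

open ComplexConjugate

section Derivatives

variable {𝕜 F : Type*} [NontriviallyNormedField 𝕜] [NormedAddCommGroup F] [NormedSpace 𝕜 F]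

theorem deriv_neg_of_odd {f : 𝕜 → F} (hf : ∀ z, f (-z) = -f z) (z : 𝕜) :
    deriv f (-z) = deriv f z := by
  have h := deriv_comp_neg f z
  rw [funext fun x => hf x, deriv.fun_neg, neg_inj] at h
  exact h.symm

theorem deriv_conj_of_conj_comm [StarRing 𝕜] [NormedStarGroup 𝕜] {f : 𝕜 → 𝕜}
    (hf : ∀ z, f (conj z) = conj (f z)) (z : 𝕜) :
    deriv f (conj z) = conj (deriv f z) := by
  have hff : conj ∘ f ∘ conj = f := funext fun w => by simp [hf]
  simpa [hff] using congrFun (deriv_conj_conj (f := f)) (conj z)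

end Derivatives

theorem deriv_const_sub_eq_conj {γ : ℝ → ℂ} {c t : ℝ}
    (hγ : (fun s => γ (c - s)) =ᶠ[nhds t] fun s => -conj (γ s)) :
    deriv γ (c - t) = conj (deriv γ t) := by
  have h := hγ.deriv_eq
  rw [deriv_comp_const_sub, deriv.fun_neg, neg_inj] at h
  exact h.trans deriv.star

theorem cInt_eq_neg_conj_cInt {γ : ℝ → ℂ}
    (hγ : ∀ t ∈ Set.Icc (0:ℝ) 1, γ (1 - t) = -conj (γ t)) (f : ℂ → ℂ) :
    cInt γ f = -conj (cInt γ fun w => -conj (f (-conj w))) := by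
  have hflip := intervalIntegral.integral_comp_sub_left (fun t => f (γ t) * deriv γ t) (1:ℝ)
    (a := 0) (b := 1)
  rw [sub_zero, sub_self] at hflip
  rw [cInt, cInt, ← hflip, ← intervalIntegral.intervalIntegral_conj,
    ← intervalIntegral.integral_neg]
  refine intervalIntegral.integral_congr_Ioo_of_le zero_le_one fun t ht => ?_
  have hγ' : deriv γ (1 - t) = conj (deriv γ t) :=
    deriv_const_sub_eq_conj (Filter.eventuallyEq_of_mem (Icc_mem_nhds ht.1 ht.2) hγ)
  simp only [hγ t (Set.Ioo_subset_Icc_self ht), hγ', map_mul, map_neg, Complex.conj_conj]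
  ring

theorem stmt_18_general (Θ : ℂ → ℂ)
    (hΘodd : ∀ z : ℂ, Θ (-z) = -Θ z)
    (hΘconj : ∀ z : ℂ, Θ ((starRingEnd ℂ) z) = (starRingEnd ℂ) (Θ z))
    (K : ℂ → ℂ) (hK : K = deriv Θ)
    (γ : ℝ → ℂ)
    (hsym : ∀ t ∈ Set.Icc (0:ℝ) 1, γ (1 - t) = -(starRingEnd ℂ) (γ t))
    (F : ℂ → ℂ → ℂ)
    (hFeq : ∀ α β : ℂ,
      F α β + (1 / (2 * (Real.pi : ℂ))) * cInt γ (fun β' => K (α - β') * F β' β)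
        = (1 / (2 * (Real.pi : ℂ))) * Θ (α - β))
    (G : ℂ → ℂ → ℂ)
    (hG : ∀ α β : ℂ,
      G α β = -(starRingEnd ℂ) (F (-(starRingEnd ℂ) α) (-(starRingEnd ℂ) β))) :
    ∀ α β : ℂ,
      G α β + (1 / (2 * (Real.pi : ℂ))) * cInt γ (fun β' => K (α - β') * G β' β)
        = (1 / (2 * (Real.pi : ℂ))) * Θ (α - β) := by
  intro α β
  have hK_neg_conj : ∀ z, K (-conj z) = conj (K z) := fun z => by
    rw [hK, ← map_neg, deriv_conj_of_conj_comm hΘconj, deriv_neg_of_odd hΘodd]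
  have hInt : cInt γ (fun β' => K (α - β') * G β' β)
      = -conj (cInt γ fun β' => K (-conj α - β') * F β' (-conj β)) := by
    rw [cInt_eq_neg_conj_cInt hsym]
    congr 3
    funext w
    have hsub : α - -conj w = -conj (-conj α - w) := by
      simp only [map_sub, map_neg, Complex.conj_conj]; ring
    rw [hG, hsub, hK_neg_conj]
    simp only [map_mul, map_neg, Complex.conj_conj, neg_neg]
    ring
  have hΘ : Θ (-conj α - -conj β) = -conj (Θ (α - β)) := by
    rw [← hΘconj, ← hΘodd]; congr 1; simp only [map_sub]; ring
  have hF := congrArg conj (hFeq (-conj α) (-conj β))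
  simp only [hΘ, map_add, map_mul, map_neg, map_div₀, map_one, map_ofNat, Complex.conj_ofReal,
    Complex.conj_conj] at hF
  rw [hG, hInt]
  linear_combination -hF

/-- the symmetry `F(−α*, −β*) = −F(α,β)*` of the kernel of the Bethe
integral equation: if `Θ` is holomorphic, odd, with real symmetry, `K = Θ'`, the contour
satisfies `γ(1−t) = −conj(γ(t))`, and `F` solves
`F(α,β) + (1/2π)∫_C K(α−β')F(β',β)dβ' = (1/2π)Θ(α−β)`, then
`G(α,β) = −conj(F(−conj α, −conj β))` solves the same equation. -/
theorem stmt_18 (Θ : ℂ → ℂ) (hΘd : Differentiable ℂ Θ)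
    (hΘodd : ∀ z : ℂ, Θ (-z) = -Θ z)
    (hΘconj : ∀ z : ℂ, Θ ((starRingEnd ℂ) z) = (starRingEnd ℂ) (Θ z))
    (K : ℂ → ℂ) (hK : K = deriv Θ)
    (γ : ℝ → ℂ) (hγ : ContDiff ℝ 1 γ)
    (hsym : ∀ t ∈ Set.Icc (0:ℝ) 1, γ (1 - t) = -(starRingEnd ℂ) (γ t))
    (F : ℂ → ℂ → ℂ) (hFc : Continuous fun p : ℂ × ℂ => F p.1 p.2)
    (hFeq : ∀ α β : ℂ,
      F α β + (1 / (2 * (Real.pi : ℂ))) * cInt γ (fun β' => K (α - β') * F β' β)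
        = (1 / (2 * (Real.pi : ℂ))) * Θ (α - β))
    (G : ℂ → ℂ → ℂ)
    (hG : ∀ α β : ℂ,
      G α β = -(starRingEnd ℂ) (F (-(starRingEnd ℂ) α) (-(starRingEnd ℂ) β))) :
    ∀ α β : ℂ,
      G α β + (1 / (2 * (Real.pi : ℂ))) * cInt γ (fun β' => K (α - β') * G β' β)
        = (1 / (2 * (Real.pi : ℂ))) * Θ (α - β) :=
  stmt_18_general Θ hΘodd hΘconj K hK γ hsym F hFeq G hG
end
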